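/- Let (X, ρ) be a metric space, λ ∈ Δ∞, and x = (x_k)_{k∈ℕ} a sequence in X. Then Λ_x(λ) ⊆ Γ_x(λ) ⊆ L_x, i.e., every λ-statistical limit point of x is a λ-statistical cluster point of x, and every λ-statistical cluster point of x is an ordinary limit point of x. (This is the paper's Theorem 4.1, specialized to the PM space induced by a metric, where F_{xy} = ε_{ρ(x,y)} and the strong topology is the metric topology.) -/

import Mathlib

open Filter Topology

/-- `l` belongs to the class `Δ∞`: a nondecreasing (for indices `≥ 1`) sequence of
positive reals tending to `∞` with `l 1 = 1` and `l (n+1) ≤ l n + 1`. -/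
def DeltaInfty (l : ℕ → ℝ) : Prop :=
  (∀ n, 1 ≤ n → 0 < l n) ∧ (∀ m n, 1 ≤ m → m ≤ n → l m ≤ l n) ∧
    Tendsto l atTop atTop ∧ l 1 = 1 ∧ ∀ n, 1 ≤ n → l (n + 1) ≤ l n + 1

open Classical in
/-- The number of elements of `M` in the window `I_n = [n - l n + 1, n] ∩ ℕ`. -/
noncomputable def lamCount (l : ℕ → ℝ) (M : Set ℕ) (n : ℕ) : ℕ :=
  ((Finset.Icc 1 n).filter (fun (k : ℕ) => ((n : ℝ) - l n + 1 ≤ (k : ℝ)) ∧ k ∈ M)).card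

/-- `M ⊆ ℕ` has `λ`-density `r`: `|{k ∈ I_n : k ∈ M}| / l n → r`. -/
def lamDensity (l : ℕ → ℝ) (M : Set ℕ) (r : ℝ) : Prop :=
  Tendsto (fun n => (lamCount l M n : ℝ) / l n) atTop (𝓝 r)

/-- `L` is a `λ`-statistical limit point of `x`: some subsequence of `x`, indexed (in
increasing order) by an infinite set that does not have `λ`-density zero, converges to `L`. -/
def LamStatLimitPt {X : Type*} [MetricSpace X] (l : ℕ → ℝ) (x : ℕ → X) (L : X) : Prop :=
  ∃ φ : ℕ → ℕ, StrictMono φ ∧ ¬ lamDensity l (Set.range φ) 0 ∧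
    Tendsto (x ∘ φ) atTop (𝓝 L)

/-- `Y` is a `λ`-statistical cluster point of `x`: for every `t > 0` the set
`{k : dist (x k) Y < t}` does not have `λ`-density zero. -/
def LamStatClusterPt {X : Type*} [MetricSpace X] (l : ℕ → ℝ) (x : ℕ → X) (Y : X) : Prop :=
  ∀ t > 0, ¬ lamDensity l {k | dist (x k) Y < t} 0

/-- `L` is an ordinary limit point of `x`: some subsequence of `x` converges to `L`. -/
def SeqLimitPt {X : Type*} [MetricSpace X] (x : ℕ → X) (L : X) : Prop :=
  ∃ φ : ℕ → ℕ, StrictMono φ ∧ Tendsto (x ∘ φ) atTop (𝓝 L)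


/-!
Sets of `λ`-density zero are closed under subsets and finite unions, and, since `λ → ∞`,
contain every finite set. A subsequence converging to `L` lies, up to finitely many terms,
in each ball around `L`, so a ball around a `λ`-statistical limit point cannot have
`λ`-density zero. A ball around a `λ`-statistical cluster point is therefore hit by
infinitely many terms, i.e. the point is a cluster point of `x`, hence the limit of a
subsequence.
-/

section lamCount

variable (l : ℕ → ℝ)

lemma lamCount_mono {A B : Set ℕ} (h : A ⊆ B) (n : ℕ) : lamCount l A n ≤ lamCount l B n := by
  unfold lamCount
  refine Finset.card_le_card fun k hk => ?_
  simp only [Finset.mem_filter] at hk ⊢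
  exact ⟨hk.1, hk.2.1, h hk.2.2⟩

lemma lamCount_union_le (A B : Set ℕ) (n : ℕ) :
    lamCount l (A ∪ B) n ≤ lamCount l A n + lamCount l B n := by
  unfold lamCount
  refine (Finset.card_le_card fun k hk => ?_).trans (Finset.card_union_le _ _)
  simp only [Finset.mem_filter, Finset.mem_union, Set.mem_union] at hk ⊢
  tauto

lemma lamCount_le_card (s : Finset ℕ) (n : ℕ) : lamCount l s n ≤ s.card := by
  unfold lamCount
  refine Finset.card_le_card fun k hk => ?_
  simp only [Finset.mem_filter, Finset.mem_coe] at hk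
  exact hk.2.2

end lamCount

section lamDensity

variable {l : ℕ → ℝ} (hl : Tendsto l atTop atTop)
include hl

lemma lamDensity_zero_of_eventually_le {A : Set ℕ} {u : ℕ → ℝ} (hu : Tendsto u atTop (𝓝 0))
    (hle : ∀ᶠ n in atTop, (lamCount l A n : ℝ) ≤ u n * l n) : lamDensity l A 0 := by
  refine squeeze_zero' ?_ ?_ hu
  · filter_upwards [hl.eventually_gt_atTop 0] with n hn
    positivity
  · filter_upwards [hl.eventually_gt_atTop 0, hle] with n hn hle
    exact (div_le_iff₀ hn).mpr hle

lemma lamDensity_zero_mono {A B : Set ℕ} (h : A ⊆ B) (hB : lamDensity l B 0) :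
    lamDensity l A 0 := by
  refine lamDensity_zero_of_eventually_le hl hB ?_
  filter_upwards [hl.eventually_gt_atTop 0] with n hn
  rw [div_mul_cancel₀ _ hn.ne']
  exact_mod_cast lamCount_mono l h n

lemma lamDensity_zero_union {A B : Set ℕ} (hA : lamDensity l A 0) (hB : lamDensity l B 0) :
    lamDensity l (A ∪ B) 0 := by
  refine lamDensity_zero_of_eventually_le hl (by simpa using hA.add hB) ?_
  filter_upwards [hl.eventually_gt_atTop 0] with n hn
  rw [add_mul, div_mul_cancel₀ _ hn.ne', div_mul_cancel₀ _ hn.ne']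
  exact_mod_cast lamCount_union_le l A B n

lemma lamDensity_zero_of_finite {A : Set ℕ} (hA : A.Finite) : lamDensity l A 0 := by
  have hc : Tendsto (fun n => (hA.toFinset.card : ℝ) / l n) atTop (𝓝 0) :=
    tendsto_const_nhds.div_atTop hl
  refine lamDensity_zero_of_eventually_le hl hc ?_
  filter_upwards [hl.eventually_gt_atTop 0] with n hn
  rw [div_mul_cancel₀ _ hn.ne']
  exact_mod_cast hA.coe_toFinset ▸ lamCount_le_card l hA.toFinset n

lemma infinite_of_not_lamDensity_zero {A : Set ℕ} (hA : ¬ lamDensity l A 0) : A.Infinite :=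
  fun hfin => hA (lamDensity_zero_of_finite hl hfin)

end lamDensity

section points

variable {X : Type*} [MetricSpace X] {l : ℕ → ℝ} {x : ℕ → X}

lemma LamStatLimitPt.lamStatClusterPt (hl : Tendsto l atTop atTop) {L : X}
    (hL : LamStatLimitPt l x L) : LamStatClusterPt l x L := by
  obtain ⟨φ, -, hφ, hlim⟩ := hL
  intro t ht hball
  obtain ⟨N, hN⟩ := Metric.tendsto_atTop.mp hlim t ht
  have hcover : Set.range φ ⊆ {k | dist (x k) L < t} ∪ φ '' Set.Iio N := by
    rintro _ ⟨m, rfl⟩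
    rcases le_or_gt N m with hm | hm
    · exact Or.inl (hN m hm)
    · exact Or.inr ⟨m, hm, rfl⟩
  exact hφ <| lamDensity_zero_mono hl hcover <|
    lamDensity_zero_union hl hball (lamDensity_zero_of_finite hl ((Set.finite_Iio N).image φ))

lemma LamStatClusterPt.mapClusterPt (hl : Tendsto l atTop atTop) {Y : X}
    (hY : LamStatClusterPt l x Y) : MapClusterPt Y atTop x :=
  Metric.nhds_basis_ball.mapClusterPt_iff_frequently.mpr fun t ht =>
    Nat.frequently_atTop_iff_infinite.mpr (infinite_of_not_lamDensity_zero hl (hY t ht))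

end points

theorem lamStatLimitPt_subset_clusterPt_subset_limitPt {X : Type*} [MetricSpace X]
    (l : ℕ → ℝ) (hl : DeltaInfty l) (x : ℕ → X) :
    {L | LamStatLimitPt l x L} ⊆ {Y | LamStatClusterPt l x Y} ∧
      {Y | LamStatClusterPt l x Y} ⊆ {L | SeqLimitPt x L} :=
  have htop : Tendsto l atTop atTop := hl.2.2.1
  ⟨fun _ hL => hL.lamStatClusterPt htop, fun _ hY => (hY.mapClusterPt htop).tendsto_subseq⟩
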